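/- For every integer r ≥ 1 there holds Σ_{i=1}^{r} e_{2i} · g_{2i,2r+1} = (q^{r(2r+1)} - 1)/(q - 1) in K. -/

import Mathlib

/-!
Put `c_i := (q - 1) e_{2i} = q^{i(i-1)} ∏_{j<i} (q^{2j+1} - 1)`; at a prime power `q` this is the
number of nondegenerate alternating forms on `𝔽_q^{2i}`. Sorting the alternating forms on `𝔽_q^n`
by their radical gives `S(n) := ∑_i c_i [n, 2i]_q = q^{n(n-1)/2}`, and the theorem is the case
`n = 2r + 1` with the term `i = 0` moved to the right.

For `q` not a root of unity, `S(n+1) = q^n S(n)`: q-Pascal `[n+1, k+1] = [n, k] + q^{k+1} [n, k+1]`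
splits each term of `S(n+1)`, and absorption `(1 - q^{k+1}) [n, k+1] = (1 - q^{n-k}) [n, k]` turns
`c_{i+1} [n, 2i+1]` into `(q^n - q^{2i}) c_i [n, 2i]`, after which the sum telescopes.
-/

open Finset

noncomputable def q : RatFunc ℚ := RatFunc.X

noncomputable def gauss (x : RatFunc ℚ) (m r : ℤ) : RatFunc ℚ :=
  if 0 ≤ r ∧ r ≤ m then
    ∏ i ∈ Finset.range r.toNat, (1 - x ^ (m - (i : ℤ))) / (1 - x ^ ((i : ℤ) + 1))
  else 0

noncomputable def e (i : ℤ) : RatFunc ℚ :=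
  q ^ (i * (i - 1)) * (∏ j ∈ Finset.Icc (1 : ℤ) i, (q ^ (2 * j - 1) - 1)) / (q - 1)

section QBinomial

variable {F : Type*} [Field F] (x : F)

def qFactorial (n : ℕ) : F := ∏ i ∈ range n, (1 - x ^ (i + 1))

def qBinom (n k : ℕ) : F :=
  if k ≤ n then qFactorial x n / (qFactorial x k * qFactorial x (n - k)) else 0

@[simp] lemma qFactorial_zero : qFactorial x 0 = 1 := prod_range_zero _

lemma qFactorial_succ (n : ℕ) : qFactorial x (n + 1) = qFactorial x n * (1 - x ^ (n + 1)) :=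
  prod_range_succ _ n

lemma qFactorial_sub_mul_prod_range {n k : ℕ} (h : k ≤ n) :
    qFactorial x (n - k) * ∏ i ∈ range k, (1 - x ^ (n - i)) = qFactorial x n := by
  induction k with
  | zero => simp
  | succ k ih =>
    obtain ⟨m, rfl⟩ : ∃ m, n = k + 1 + m := ⟨n - (k + 1), by omega⟩
    rw [prod_range_succ, ← ih (by omega), show k + 1 + m - k = m + 1 by omega, qFactorial_succ,
      show k + 1 + m - (k + 1) = m by omega]
    ring

lemma qBinom_of_lt {n k : ℕ} (h : n < k) : qBinom x n k = 0 := if_neg (by omega)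

variable {x} (hx : ¬IsOfFinOrder x)
include hx

lemma one_sub_pow_ne_zero {j : ℕ} (hj : j ≠ 0) : 1 - x ^ j ≠ 0 :=
  sub_ne_zero.2 fun h => hx (isOfFinOrder_iff_pow_eq_one.2 ⟨j, Nat.pos_of_ne_zero hj, h.symm⟩)

lemma qFactorial_ne_zero (n : ℕ) : qFactorial x n ≠ 0 :=
  prod_ne_zero_iff.2 fun i _ => one_sub_pow_ne_zero hx i.succ_ne_zero

lemma qBinom_zero_right (n : ℕ) : qBinom x n 0 = 1 := by
  simp [qBinom, qFactorial_ne_zero hx]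

lemma qBinom_self (n : ℕ) : qBinom x n n = 1 := by
  simp [qBinom, qFactorial_ne_zero hx]

lemma qBinom_eq_prod_range (n k : ℕ) :
    qBinom x n k = ∏ i ∈ range k, (1 - x ^ (n - i)) / (1 - x ^ (i + 1)) := by
  rcases le_or_gt k n with h | h
  · rw [qBinom, if_pos h, prod_div_distrib, ← qFactorial_sub_mul_prod_range x h]
    have := qFactorial_ne_zero hx (n - k)
    field_simp
    rfl
  · rw [qBinom_of_lt x h, prod_eq_zero (mem_range.2 h) (by simp)]

lemma qBinom_succ_succ (n k : ℕ) :
    qBinom x (n + 1) (k + 1) = qBinom x n k + x ^ (k + 1) * qBinom x n (k + 1) := by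
  rcases lt_trichotomy k n with h | rfl | h
  · obtain ⟨m, rfl⟩ : ∃ m, n = k + 1 + m := ⟨n - (k + 1), by omega⟩
    simp only [qBinom, if_pos (by omega : k + 1 ≤ k + 1 + m + 1),
      if_pos (by omega : k ≤ k + 1 + m), if_pos (by omega : k + 1 ≤ k + 1 + m),
      show k + 1 + m + 1 - (k + 1) = m + 1 by omega, show k + 1 + m - k = m + 1 by omega,
      Nat.add_sub_cancel_left, qFactorial_succ]
    have := qFactorial_ne_zero hx k
    have := qFactorial_ne_zero hx m
    have := one_sub_pow_ne_zero hx k.succ_ne_zero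
    have := one_sub_pow_ne_zero hx m.succ_ne_zero
    field_simp
    ring
  · rw [qBinom_self hx, qBinom_self hx, qBinom_of_lt x k.lt_succ_self, mul_zero, add_zero]
  · rw [qBinom_of_lt x h, qBinom_of_lt x (by omega), qBinom_of_lt x (by omega), mul_zero, add_zero]

lemma qBinom_succ_right_eq (n k : ℕ) :
    qBinom x n (k + 1) * (1 - x ^ (k + 1)) = qBinom x n k * (1 - x ^ (n - k)) := by
  rcases lt_or_ge k n with h | h
  · obtain ⟨m, rfl⟩ : ∃ m, n = k + 1 + m := ⟨n - (k + 1), by omega⟩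
    simp only [qBinom, if_pos h.le, if_pos (by omega : k + 1 ≤ k + 1 + m),
      show k + 1 + m - k = m + 1 by omega, Nat.add_sub_cancel_left, qFactorial_succ]
    have := qFactorial_ne_zero hx k
    have := qFactorial_ne_zero hx m
    have := one_sub_pow_ne_zero hx k.succ_ne_zero
    have := one_sub_pow_ne_zero hx m.succ_ne_zero
    field_simp
  · rw [qBinom_of_lt x (by omega), Nat.sub_eq_zero_of_le h, pow_zero, sub_self, zero_mul, mul_zero]

end QBinomial

section AltForms

variable {F : Type*} [Field F] (x : F)

def altFormCount (i : ℕ) : F := x ^ (i * (i - 1)) * ∏ j ∈ range i, (x ^ (2 * j + 1) - 1)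

@[simp] lemma altFormCount_zero : altFormCount x 0 = 1 := by simp [altFormCount]

lemma altFormCount_succ (i : ℕ) :
    altFormCount x (i + 1) = x ^ (2 * i) * (x ^ (2 * i + 1) - 1) * altFormCount x i := by
  have hexp : (i + 1) * (i + 1 - 1) = 2 * i + i * (i - 1) := by
    cases i with
    | zero => rfl
    | succ i => simp only [Nat.add_sub_cancel]; ring
  rw [altFormCount, altFormCount, prod_range_succ, hexp, pow_add]
  ring

variable {x} (hx : ¬IsOfFinOrder x)
include hx

lemma altFormCount_succ_mul_qBinom (n i : ℕ) :
    altFormCount x (i + 1) * qBinom x n (2 * i + 1) =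
      (x ^ n - x ^ (2 * i)) * altFormCount x i * qBinom x n (2 * i) := by
  rcases lt_or_ge n (2 * i) with h | h
  · rw [qBinom_of_lt x h, qBinom_of_lt x (by omega), mul_zero, mul_zero]
  · have hpow : x ^ (2 * i) * (1 - x ^ (n - 2 * i)) = x ^ (2 * i) - x ^ n := by
      rw [mul_one_sub, ← pow_add, Nat.add_sub_cancel' h]
    linear_combination (-(x ^ (2 * i)) * altFormCount x i) * qBinom_succ_right_eq hx n (2 * i)
      + altFormCount_succ x i * qBinom x n (2 * i + 1)
      - altFormCount x i * qBinom x n (2 * i) * hpow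

lemma sum_altFormCount_mul_qBinom_succ (n N : ℕ) :
    ∑ i ∈ range (N + 1), altFormCount x i * qBinom x (n + 1) (2 * i) =
      x ^ n * ∑ i ∈ range (N + 1), altFormCount x i * qBinom x n (2 * i)
        + (x ^ (2 * N) - x ^ n) * altFormCount x N * qBinom x n (2 * N) := by
  induction N with
  | zero => simp [qBinom_zero_right hx]
  | succ N ih =>
    have hpascal := qBinom_succ_succ hx n (2 * N + 1)
    rw [sum_range_succ, ih, sum_range_succ _ (N + 1), show 2 * (N + 1) = 2 * N + 1 + 1 by ring,
      hpascal]
    linear_combination altFormCount_succ_mul_qBinom hx n N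

lemma sum_altFormCount_mul_qBinom {n N : ℕ} (h : n ≤ 2 * N + 1) :
    ∑ i ∈ range (N + 1), altFormCount x i * qBinom x n (2 * i) = x ^ n.choose 2 := by
  induction n with
  | zero =>
    rw [sum_eq_single 0 (fun i _ hi => by rw [qBinom_of_lt x (by omega), mul_zero]) (by simp)]
    simp [qBinom_zero_right hx]
  | succ n ih =>
    have hlast : (x ^ (2 * N) - x ^ n) * altFormCount x N * qBinom x n (2 * N) = 0 := by
      rcases (by omega : n < 2 * N ∨ n = 2 * N) with h | rfl
      · rw [qBinom_of_lt x h, mul_zero]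
      · rw [sub_self, zero_mul, zero_mul]
    rw [sum_altFormCount_mul_qBinom_succ hx, hlast, add_zero, ih (by omega), ← pow_add,
      Nat.choose_succ_succ', Nat.choose_one_right, add_comm]

end AltForms

@[to_additive sum_Icc_one_natCast]
lemma prod_Icc_one_natCast {M : Type*} [CommMonoid M] (f : ℤ → M) (n : ℕ) :
    ∏ i ∈ Icc (1 : ℤ) n, f i = ∏ i ∈ range n, f ((i + 1 : ℕ) : ℤ) := by
  rw [Int.Icc_eq_finset_map, prod_map]
  simp [add_comm]

lemma q_not_isOfFinOrder : ¬IsOfFinOrder q :=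
  not_isOfFinOrder_of_injective_pow fun a b h => by
    simpa [q, ← RatFunc.algebraMap_X, ← map_pow, RatFunc.intDegree_polynomial] using
      congrArg RatFunc.intDegree h

lemma gauss_natCast {x : RatFunc ℚ} (hx : ¬IsOfFinOrder x) (n k : ℕ) :
    gauss x n k = qBinom x n k := by
  rw [gauss]
  split_ifs with h
  · rw [qBinom_eq_prod_range hx, Int.toNat_natCast]
    refine Finset.prod_congr rfl fun i hi => ?_
    rw [← Nat.cast_sub (by rw [mem_range] at hi; omega), ← Nat.cast_succ, zpow_natCast,
      zpow_natCast]
  · rw [qBinom_of_lt x (by omega)]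

lemma e_natCast (m : ℕ) : e m = altFormCount q m / (q - 1) := by
  have hexp : (m : ℤ) * (m - 1) = (m * (m - 1) : ℕ) := by
    cases m with
    | zero => rfl
    | succ m => push_cast; ring
  rw [e, altFormCount, prod_Icc_one_natCast, hexp, zpow_natCast]
  congr 3 with j
  rw [show 2 * ((j + 1 : ℕ) : ℤ) - 1 = (2 * j + 1 : ℕ) by push_cast; ring, zpow_natCast]

theorem stmt2 (r : ℤ) (hr : 1 ≤ r) :
    ∑ i ∈ Finset.Icc (1 : ℤ) r, e i * gauss q (2 * r + 1) (2 * i) =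
      (q ^ (r * (2 * r + 1)) - 1) / (q - 1) := by
  lift r to ℕ using (by omega)
  have hchoose : (2 * r + 1).choose 2 = r * (2 * r + 1) := by
    rw [Nat.choose_two_right, Nat.add_sub_cancel, mul_comm, mul_assoc,
      Nat.mul_div_cancel_left _ two_pos]
  have hsum := sum_altFormCount_mul_qBinom q_not_isOfFinOrder (le_refl (2 * r + 1))
  rw [sum_range_succ', altFormCount_zero, mul_zero, qBinom_zero_right q_not_isOfFinOrder,
    mul_one, hchoose, ← eq_sub_iff_add_eq] at hsum
  calc ∑ i ∈ Icc (1 : ℤ) r, e i * gauss q (2 * r + 1) (2 * i)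
        = (∑ i ∈ range r, altFormCount q (i + 1) * qBinom q (2 * r + 1) (2 * (i + 1)))
            / (q - 1) := by
        rw [sum_Icc_one_natCast, sum_div]
        refine sum_congr rfl fun i _ => ?_
        rw [e_natCast, show (2 * (r : ℤ) + 1) = (2 * r + 1 : ℕ) by push_cast; ring,
          show 2 * ((i + 1 : ℕ) : ℤ) = (2 * (i + 1) : ℕ) by push_cast; ring,
          gauss_natCast q_not_isOfFinOrder, div_mul_eq_mul_div]
    _ = (q ^ (r * (2 * r + 1) : ℤ) - 1) / (q - 1) := by
        rw [hsum, ← zpow_natCast]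
        norm_cast
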